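/- For A ∈ ℝ^{n×n} and I, J ⊆ [n] with |I|=|J|=k, the maximum base value of k assignments with supervisions I on J equals adj(A)^{∧k}_{J,I}: max over bijections σ : I → J and permutations ρ₁,…,ρ_k ∈ S_n with ρ_t(i_t) = σ(i_t) of Σ_{t=1}^k Σ_{i ≠ i_t} A_{i,ρ_t(i)} = max over bijections σ: I→J of Σ_{i∈I} adj(A)_{σ(i),i}. -/
import Mathlib


/-- The tropical (max-plus) permanent of a real `n × n` matrix. -/
noncomputable def tropPer {n : ℕ} (A : Matrix (Fin n) (Fin n) ℝ) : ℝ :=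
  Finset.univ.sup' Finset.univ_nonempty fun π : Equiv.Perm (Fin n) => ∑ i, A i (π i)

/-- Tropical compound entry: the maximal weight of a bijection `I → J`,
`A^{∧k}_{I,J} = max over bijections σ : I → J of ∑_{i ∈ I} A_{i, σ(i)}`. -/
noncomputable def tropCompound {n : ℕ} (A : Matrix (Fin n) (Fin n) ℝ) (I J : Finset (Fin n))
    (h : I.card = J.card) : ℝ :=
  haveI : Nonempty ({x // x ∈ I} ≃ {x // x ∈ J}) :=
    ⟨Fintype.equivOfCardEq (by simpa using h)⟩
  Finset.univ.sup' Finset.univ_nonempty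
    fun σ : {x // x ∈ I} ≃ {x // x ∈ J} => ∑ i, A i.1 (σ i).1

/-- Tropical adjoint entry `adj(A)_{i,j} = per(A[{j}ᶜ, {i}ᶜ])`. -/
noncomputable def tropAdj {n : ℕ} (A : Matrix (Fin n) (Fin n) ℝ) (i j : Fin n) : ℝ :=
  tropCompound A ({j}ᶜ) ({i}ᶜ) (by simp [Finset.card_compl])

/-- The tropical adjoint matrix. -/
noncomputable def tropAdjM {n : ℕ} (A : Matrix (Fin n) (Fin n) ℝ) :
    Matrix (Fin n) (Fin n) ℝ := fun i j => tropAdj A i j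

namespace TropAux

variable {n : ℕ}

lemma mem_compl_singleton {i x : Fin n} : x ∈ ({i}ᶜ : Finset (Fin n)) ↔ x ≠ i := by simp

/-- Extend a bijection between complements of `{i}` and `{j}` to a permutation sending `i` to `j`. -/
def extendPerm (i j : Fin n)
    (e : {x // x ∈ ({i}ᶜ : Finset (Fin n))} ≃ {x // x ∈ ({j}ᶜ : Finset (Fin n))}) :
    Equiv.Perm (Fin n) where
  toFun x := if h : x = i then j else (e ⟨x, mem_compl_singleton.2 h⟩ : Fin n)
  invFun y := if h : y = j then i else (e.symm ⟨y, mem_compl_singleton.2 h⟩ : Fin n)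
  left_inv x := by
    by_cases h : x = i
    · simp [h]
    · have h2 : ((e ⟨x, mem_compl_singleton.2 h⟩ : _) : Fin n) ≠ j :=
        mem_compl_singleton.1 (e ⟨x, mem_compl_singleton.2 h⟩).2
      simp only [dif_neg h, dif_neg h2]
      exact congrArg Subtype.val (e.symm_apply_apply ⟨x, mem_compl_singleton.2 h⟩)
  right_inv y := by
    by_cases h : y = j
    · simp [h]
    · have h2 : ((e.symm ⟨y, mem_compl_singleton.2 h⟩ : _) : Fin n) ≠ i :=
        mem_compl_singleton.1 (e.symm ⟨y, mem_compl_singleton.2 h⟩).2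
      simp only [dif_neg h, dif_neg h2]
      exact congrArg Subtype.val (e.apply_symm_apply ⟨y, mem_compl_singleton.2 h⟩)

/-- Restrict a permutation to a bijection between complements. -/
def restrictPerm (ρ : Equiv.Perm (Fin n)) (i : Fin n) :
    {x // x ∈ ({i}ᶜ : Finset (Fin n))} ≃ {x // x ∈ ({ρ i}ᶜ : Finset (Fin n))} where
  toFun x := ⟨ρ x, mem_compl_singleton.2 fun hx =>
    mem_compl_singleton.1 x.2 (ρ.injective hx)⟩
  invFun y := ⟨ρ.symm y, mem_compl_singleton.2 fun hy =>
    mem_compl_singleton.1 y.2 (by rw [← Equiv.apply_symm_apply ρ y.1, hy])⟩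
  left_inv x := Subtype.ext (ρ.symm_apply_apply x)
  right_inv y := Subtype.ext (ρ.apply_symm_apply y)

lemma le_tropCompound {A : Matrix (Fin n) (Fin n) ℝ} {I J : Finset (Fin n)}
    {h : I.card = J.card} (σ : {x // x ∈ I} ≃ {x // x ∈ J}) :
    ∑ i, A i.1 (σ i).1 ≤ tropCompound A I J h := by
  unfold tropCompound
  exact Finset.le_sup' (fun σ : {x // x ∈ I} ≃ {x // x ∈ J} => ∑ i, A i.1 (σ i).1)
    (Finset.mem_univ σ)

lemma tropCompound_attained {A : Matrix (Fin n) (Fin n) ℝ} {I J : Finset (Fin n)}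
    {h : I.card = J.card} :
    ∃ σ : {x // x ∈ I} ≃ {x // x ∈ J}, tropCompound A I J h = ∑ i, A i.1 (σ i).1 := by
  haveI : Nonempty ({x // x ∈ I} ≃ {x // x ∈ J}) :=
    ⟨Fintype.equivOfCardEq (by simpa using h)⟩
  obtain ⟨σ, -, hσ⟩ := Finset.exists_mem_eq_sup' (Finset.univ_nonempty)
    (fun σ : {x // x ∈ I} ≃ {x // x ∈ J} => ∑ i, A i.1 (σ i).1)
  exact ⟨σ, by unfold tropCompound; exact hσ⟩

lemma sum_compl_le_adj (A : Matrix (Fin n) (Fin n) ℝ) (ρ : Equiv.Perm (Fin n)) (i : Fin n) :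
    ∑ m ∈ ({i}ᶜ : Finset (Fin n)), A m (ρ m) ≤ tropAdjM A (ρ i) i := by
  have h1 := le_tropCompound (A := A) (σ := restrictPerm ρ i)
    (h := by simp [Finset.card_compl])
  have h2 : ∑ m : {x // x ∈ ({i}ᶜ : Finset (Fin n))}, A m.1 ((restrictPerm ρ i) m).1
      = ∑ m ∈ ({i}ᶜ : Finset (Fin n)), A m (ρ m) :=
    Finset.sum_coe_sort ({i}ᶜ) (fun m => A m (ρ m))
  rw [h2] at h1
  exact h1

lemma adj_attained (A : Matrix (Fin n) (Fin n) ℝ) (i j : Fin n) :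
    ∃ ρ : Equiv.Perm (Fin n), ρ i = j ∧
      tropAdjM A j i = ∑ m ∈ ({i}ᶜ : Finset (Fin n)), A m (ρ m) := by
  obtain ⟨e, he⟩ := tropCompound_attained (A := A) (I := ({i}ᶜ : Finset (Fin n)))
    (J := ({j}ᶜ : Finset (Fin n))) (h := by simp [Finset.card_compl])
  refine ⟨extendPerm i j e, ?_, ?_⟩
  · show (if h : i = i then j else _) = j
    simp
  · refine he.trans ?_
    rw [← Finset.sum_coe_sort ({i}ᶜ : Finset (Fin n)) (fun m => A m (extendPerm i j e m))]
    refine Finset.sum_congr rfl fun m _ => ?_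
    have hm : (m : Fin n) ≠ i := mem_compl_singleton.1 m.2
    show A m.1 (e m).1 = A m.1 (extendPerm i j e m.1)
    have : extendPerm i j e m.1 = (e ⟨m.1, mem_compl_singleton.2 hm⟩ : Fin n) := dif_neg hm
    rw [this]

end TropAux

open TropAux in
/-- The maximum base value of `k` assignments with supervisions `I` on `J`
equals `adj(A)^{∧k}_{J,I}`. -/
theorem max_base_value_eq_adj_compound {n : ℕ} (A : Matrix (Fin n) (Fin n) ℝ)
    (I J : Finset (Fin n)) (h : J.card = I.card) :
    IsGreatest
      {v : ℝ | ∃ (σ : {x // x ∈ I} ≃ {x // x ∈ J})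
          (ρ : {x // x ∈ I} → Equiv.Perm (Fin n)),
        (∀ i : {x // x ∈ I}, ρ i (i : Fin n) = (σ i : Fin n)) ∧
        v = ∑ i : {x // x ∈ I},
              ∑ m ∈ ({(i : Fin n)}ᶜ : Finset (Fin n)), A m (ρ i m)}
      (tropCompound (tropAdjM A) J I h) := by
  constructor
  · obtain ⟨τ, hτ⟩ := tropCompound_attained (A := tropAdjM A) (I := J) (J := I) (h := h)
    choose ρ hρ1 hρ2 using fun i : {x // x ∈ I} => adj_attained A i.1 ((τ.symm i) : Fin n)
    refine ⟨τ.symm, ρ, hρ1, ?_⟩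
    rw [hτ]
    refine Fintype.sum_equiv τ _ _ fun j => ?_
    have := hρ2 (τ j)
    simpa using this
  · rintro v ⟨σ, ρ, hρ, rfl⟩
    calc ∑ i : {x // x ∈ I}, ∑ m ∈ ({(i : Fin n)}ᶜ : Finset (Fin n)), A m (ρ i m)
        ≤ ∑ i : {x // x ∈ I}, tropAdjM A (σ i : Fin n) (i : Fin n) := by
          refine Finset.sum_le_sum fun i _ => ?_
          have := sum_compl_le_adj A (ρ i) i.1
          rwa [hρ i] at this
      _ ≤ tropCompound (tropAdjM A) J I h := by
          have hle := le_tropCompound (A := tropAdjM A) (h := h) (σ := σ.symm)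
          refine le_trans (le_of_eq ?_) hle
          refine Fintype.sum_equiv σ _ _ fun i => ?_
          simp
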